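/- arXiv:1907.01812 — 3 statements merged into one kernel-verified Lean document; each statement's English description precedes it below -/
import Mathlib

section
/- Let μ, ν be real with ν > −1 and μ − k not a nonpositive integer, let χ ≥ 0, and let k be a nonnegative integer. Then Γ(μ−k) · ∑_{r=k}^∞ (μ−k)_r χ^r / (Γ(1−k+r) (1+ν)_r r!) = Γ(μ) χ^k / (k! Γ(1+ν+k)/Γ(1+ν)) · ∑_{n=0}^∞ (μ)_n χ^n / ((k+1)_n (1+ν+k)_n n!), i.e., the regularized hypergeometric identity Γ(μ−k) ₁**F**₂(μ−k; 1−k, 1+ν; χ) = Γ(μ) χ^k ₁**F**₂(μ; k+1, 1+ν+k; χ) holds, where ₁**F**₂ denotes the regularized hypergeometric function with the reciprocal-gamma normalization absorbed. -/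
open Real

/-- The Pochhammer (rising factorial) symbol `(a)_n`. -/
noncomputable def poch (a : ℝ) (n : ℕ) : ℝ := ∏ j ∈ Finset.range n, (a + j)

/-- The regularized hypergeometric function `₁𝐅₂(α; β, γ; χ)`, with the convention that
`1/Γ` vanishes at nonpositive integers (`Real.Gamma` is `0` there). -/
noncomputable def hyp1F2reg (α β γ χ : ℝ) : ℝ :=
  ∑' n : ℕ, poch α n * χ ^ n / (Real.Gamma (β + n) * Real.Gamma (γ + n) * n.factorial)

lemma gamma_mul_poch (a : ℝ) (n : ℕ) (h : ∀ j : ℕ, j < n → a + j ≠ 0) :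
    Real.Gamma a * poch a n = Real.Gamma (a + n) := by
  induction n with
  | zero => simp [poch]
  | succ n ih =>
    have h1 : ∀ j : ℕ, j < n → a + j ≠ 0 := fun j hj => h j (Nat.lt_succ_of_lt hj)
    have h2 : a + n ≠ 0 := h n (Nat.lt_succ_self n)
    have hp : poch a (n + 1) = poch a n * (a + n) := Finset.prod_range_succ _ n
    rw [hp, ← mul_assoc, ih h1, mul_comm, ← Real.Gamma_add_one h2]
    congr 1
    push_cast
    ring

theorem regularized_1F2_identity_pos (μ ν χ : ℝ) (k : ℕ) (hν : -1 < ν) (hχ : 0 ≤ χ)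
    (hμk : ∀ n : ℕ, μ - k ≠ -(n : ℝ)) :
    Real.Gamma (μ - k) * hyp1F2reg (μ - k) (1 - k) (1 + ν) χ
      = Real.Gamma μ * χ ^ k * hyp1F2reg μ (k + 1) (1 + ν + k) χ := by
  have hμ0 : ∀ j : ℕ, μ - k + j ≠ 0 := by
    intro j h
    exact hμk j (by linarith)
  unfold hyp1F2reg
  rw [← tsum_mul_left, ← tsum_mul_left]
  set f : ℕ → ℝ := fun n =>
    Real.Gamma (μ - k) *
      (poch (μ - k) n * χ ^ n /
        (Real.Gamma (1 - k + n) * Real.Gamma (1 + ν + n) * n.factorial)) with hf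
  set g : ℕ → ℝ := fun m =>
    Real.Gamma μ * χ ^ k *
      (poch μ m * χ ^ m /
        (Real.Gamma (k + 1 + m) * Real.Gamma (1 + ν + k + m) * m.factorial)) with hg
  -- terms of f below k vanish
  have hzero : ∀ n : ℕ, n < k → f n = 0 := by
    intro n hn
    have hd : (1 : ℝ) - k + n = -((k - 1 - n : ℕ) : ℝ) := by
      have h1 : (1 : ℕ) ≤ k := Nat.one_le_of_lt (Nat.lt_of_le_of_lt (Nat.zero_le n) hn)
      have h2 : n ≤ k - 1 := Nat.le_sub_one_of_lt hn
      push_cast [Nat.cast_sub (Nat.sub_le k 1), Nat.cast_sub h1, Nat.cast_sub h2]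
      ring
    simp only [hf, hd, Real.Gamma_neg_nat_eq_zero, zero_mul, div_zero, mul_zero]
  -- shifted terms agree
  have hmain : ∀ m : ℕ, f (m + k) = g m := by
    intro m
    have e1 : (1 : ℝ) - k + (m + k : ℕ) = (m : ℝ) + 1 := by push_cast; ring
    have e2 : (k : ℝ) + 1 + m = ((k + m : ℕ) : ℝ) + 1 := by push_cast; ring
    have e3 : (1 : ℝ) + ν + (m + k : ℕ) = 1 + ν + k + m := by push_cast; ring
    have eA : Real.Gamma (μ - k) * poch (μ - k) (m + k) = Real.Gamma μ * poch μ m := by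
      have hA : Real.Gamma (μ - k) * poch (μ - k) (m + k) = Real.Gamma (μ - k + (m + k : ℕ)) :=
        gamma_mul_poch _ _ (fun j _ => hμ0 j)
      have hB : Real.Gamma μ * poch μ m = Real.Gamma (μ + m) := by
        apply gamma_mul_poch
        intro j _
        have := hμ0 (k + j)
        intro hcon
        apply this
        push_cast
        linarith
      have harg : μ - k + ((m + k : ℕ) : ℝ) = μ + m := by push_cast; ring
      rw [hA, hB, harg]
    simp only [hf, hg, e1, e2, e3, Real.Gamma_nat_eq_factorial]
    have hx : χ ^ (m + k) = χ ^ m * χ ^ k := by rw [pow_add]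
    have hfact : ((m + k).factorial : ℝ) = ((k + m).factorial : ℝ) := by rw [Nat.add_comm]
    rw [hx, hfact]
    linear_combination (χ ^ m * χ ^ k /
      (↑m.factorial * Real.Gamma (1 + ν + ↑k + ↑m) * ↑(k + m).factorial)) * eA
  -- conclude via support bijection
  apply tsum_eq_tsum_of_ne_zero_bij (fun x : Function.support g => (x : ℕ) + k)
  · intro x y hxy
    exact Subtype.ext (Nat.add_right_cancel hxy)
  · intro n hn
    have hn' : f n ≠ 0 := hn
    have hnk : k ≤ n := by
      by_contra hc
      exact hn' (hzero n (Nat.lt_of_not_le hc))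
    have hkey : f n = g (n - k) := by
      have := hmain (n - k)
      rwa [Nat.sub_add_cancel hnk] at this
    refine ⟨⟨n - k, ?_⟩, ?_⟩
    · rw [Function.mem_support, ← hkey]
      exact hn'
    · simp [Nat.sub_add_cancel hnk]
  · intro x
    exact hmain x
end

section
/- Let m be a nonnegative integer, μ real, and define G₁(s) := Γ(1+s) Γ(μ−m+s/2)/Γ(1−m+s/2). Then as s → +∞ along the positive real axis, G₁(s) = 2^{1−μ} Γ(s+μ) (1 + C₁/(s+μ−1) + O(s^{−2})), where C₁ = (1/2)(1−μ)(4m−μ). -/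
/-!
With `R(a, b; x) = Γ(x+a)/Γ(x+b) · x^(b-a)` we have
`G1 m μ s = 2^(1-μ) Γ(s+μ) R(1, μ; s) R(μ-m, 1-m; s/2)`, so it suffices to show
`R(a, b; x) = 1 + (a-b)(a+b-1)/(2x) + O(x⁻²)` and to multiply the two expansions.

Log-convexity of `Γ` gives `R(a, b; x) → 1` (Wendel's limit). Its logarithm `F` satisfies
`F(x+1) - F(x) = log(1+a/x) - log(1+b/x) + (b-a) log(1+1/x) = (b-a)(a+b-1)/(2x(x+1)) + O(x⁻³)`
by the Taylor expansion of `log(1+t)`; summing this from `x` to `∞`, where `F` vanishes,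
gives `F(x) = (a-b)(a+b-1)/(2x) + O(x⁻²)`, and `R = exp F`.
-/

open Real Filter Asymptotics

/-- `G₁(s) = Γ(1+s) Γ(μ−m+s/2)/Γ(1−m+s/2)`. -/
noncomputable def G1 (m : ℕ) (μ : ℝ) (s : ℝ) : ℝ :=
  Real.Gamma (1 + s) * Real.Gamma (μ - m + s / 2) / Real.Gamma (1 - m + s / 2)

open Topology

lemma Gamma_add_le_Gamma_mul_rpow {x l : ℝ} (hx : 0 < x) (hl₀ : 0 ≤ l) (hl₁ : l ≤ 1) :
    Gamma (x + l) ≤ Gamma x * x ^ l := by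
  have hconv := convexOn_log_Gamma.2 (Set.mem_Ioi.2 hx) (Set.mem_Ioi.2 (by linarith : 0 < x + 1))
    (sub_nonneg.2 hl₁) hl₀ (by ring)
  simp only [smul_eq_mul, Function.comp_apply] at hconv
  have hΓ := Gamma_pos_of_pos hx
  rw [show (1 - l) * x + l * (x + 1) = x + l by ring, Gamma_add_one hx.ne',
    log_mul hx.ne' hΓ.ne'] at hconv
  rw [← log_le_log_iff (Gamma_pos_of_pos (by linarith)) (by positivity),
    log_mul hΓ.ne' (rpow_pos_of_pos hx l).ne', log_rpow hx]
  linarith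

lemma tendsto_Gamma_add_div_Gamma_mul_rpow_of_mem_Icc {l : ℝ} (hl₀ : 0 ≤ l) (hl₁ : l ≤ 1) :
    Tendsto (fun x => Gamma (x + l) / (Gamma x * x ^ l)) atTop (𝓝 1) := by
  have hlow : Tendsto (fun x : ℝ => (x / (x + l)) ^ (1 - l)) atTop (𝓝 1) := by
    have h := ((tendsto_const_nhds (x := (1 : ℝ))).add
      (tendsto_inv_atTop_zero.const_mul l)).inv₀ (by simp)
    rw [mul_zero, add_zero, inv_one] at h
    simpa using (h.congr' (by
      filter_upwards [eventually_gt_atTop 0] with x hx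
      field_simp)).rpow_const (p := 1 - l) (Or.inr (by linarith))
  refine tendsto_of_tendsto_of_tendsto_of_le_of_le' hlow tendsto_const_nhds ?_ ?_
  · filter_upwards [eventually_gt_atTop 0] with x hx
    have hxl : 0 < x + l := by linarith
    have h := Gamma_add_le_Gamma_mul_rpow hxl (sub_nonneg.2 hl₁) (by linarith : 1 - l ≤ 1)
    rw [show x + l + (1 - l) = x + 1 by ring, Gamma_add_one hx.ne'] at h
    rw [le_div_iff₀ (by positivity), div_rpow hx.le hxl.le, div_mul_eq_mul_div,
      div_le_iff₀ (by positivity)]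
    calc x ^ (1 - l) * (Gamma x * x ^ l) = x * Gamma x := by
          rw [mul_left_comm, ← rpow_add hx, sub_add_cancel, rpow_one, mul_comm]
      _ ≤ _ := h
  · filter_upwards [eventually_gt_atTop 0] with x hx
    exact (div_le_one (by positivity)).2 (Gamma_add_le_Gamma_mul_rpow hx hl₀ hl₁)

lemma tendsto_add_div_self_atTop (a : ℝ) : Tendsto (fun x : ℝ => (x + a) / x) atTop (𝓝 1) := by
  have h := (tendsto_inv_atTop_zero.const_mul a).const_add 1
  rw [mul_zero, add_zero] at h
  refine h.congr' ?_
  filter_upwards [eventually_gt_atTop 0] with x hx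
  field_simp

lemma tendsto_Gamma_add_div_Gamma_mul_rpow_add_one_iff (a : ℝ) :
    Tendsto (fun x => Gamma (x + (a + 1)) / (Gamma x * x ^ (a + 1))) atTop (𝓝 1) ↔
      Tendsto (fun x => Gamma (x + a) / (Gamma x * x ^ a)) atTop (𝓝 1) := by
  have hshift : ∀ᶠ x in atTop, Gamma (x + (a + 1)) / (Gamma x * x ^ (a + 1)) =
      (x + a) / x * (Gamma (x + a) / (Gamma x * x ^ a)) := by
    filter_upwards [eventually_gt_atTop 0, eventually_gt_atTop (-a)] with x hx hxa
    rw [← add_assoc, Gamma_add_one (by linarith), rpow_add_one hx.ne']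
    field_simp
  have hr := tendsto_add_div_self_atTop a
  constructor
  · intro h
    simpa using ((hr.inv₀ one_ne_zero).mul h).congr' <| by
      filter_upwards [hshift, eventually_gt_atTop 0, eventually_gt_atTop (-a)] with x hx hx₀ hxa
      rw [hx, ← mul_assoc, inv_mul_cancel₀ (div_pos (by linarith) hx₀).ne', one_mul]
  · intro h
    simpa using (hr.mul h).congr' (hshift.mono fun x hx => hx.symm)

theorem tendsto_Gamma_add_div_Gamma_mul_rpow (a : ℝ) :
    Tendsto (fun x => Gamma (x + a) / (Gamma x * x ^ a)) atTop (𝓝 1) := by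
  suffices h : ∀ n : ℤ, Tendsto (fun x => Gamma (x + (Int.fract a + n)) /
      (Gamma x * x ^ (Int.fract a + n))) atTop (𝓝 1) by
    simpa [Int.fract_add_floor] using h ⌊a⌋
  intro n
  induction n using Int.induction_on with
  | zero =>
    simpa using tendsto_Gamma_add_div_Gamma_mul_rpow_of_mem_Icc (Int.fract_nonneg a)
      (Int.fract_lt_one a).le
  | succ i ih =>
    rw [Int.cast_add, Int.cast_one, ← add_assoc]
    exact (tendsto_Gamma_add_div_Gamma_mul_rpow_add_one_iff _).2 ih
  | pred i ih =>
    rw [← tendsto_Gamma_add_div_Gamma_mul_rpow_add_one_iff]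
    rwa [Int.cast_sub, Int.cast_one, add_sub, sub_add_cancel]

theorem tendsto_Gamma_div_Gamma_mul_rpow (a b : ℝ) :
    Tendsto (fun x => Gamma (x + a) / Gamma (x + b) * x ^ (b - a)) atTop (𝓝 1) := by
  have h := (tendsto_Gamma_add_div_Gamma_mul_rpow a).div
    (tendsto_Gamma_add_div_Gamma_mul_rpow b) one_ne_zero
  rw [div_one] at h
  refine h.congr' ?_
  filter_upwards [eventually_gt_atTop 0, eventually_gt_atTop (-b)] with x hx hxb
  have hΓ := Gamma_pos_of_pos hx
  have hΓb := Gamma_pos_of_pos (by linarith : 0 < x + b)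
  rw [Pi.div_apply, rpow_sub hx]
  field_simp

lemma log_one_add_sub_sub_isBigO :
    (fun t : ℝ => log (1 + t) - (t - t ^ 2 / 2)) =O[𝓝 0] fun t => t ^ 3 := by
  refine .of_bound 2 ?_
  filter_upwards [Metric.ball_mem_nhds (0 : ℝ) one_half_pos] with t ht
  rw [Metric.mem_ball, dist_zero_right, norm_eq_abs] at ht
  have h := abs_log_sub_add_sum_range_le (x := -t) (by rw [abs_neg]; linarith) 2
  norm_num [Finset.sum_range_succ] at h
  rw [norm_eq_abs, norm_eq_abs, abs_pow]
  calc |log (1 + t) - (t - t ^ 2 / 2)| = |-t + t ^ 2 / 2 + log (1 + t)| := by ring_nf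
    _ ≤ |t| ^ 3 / (1 - |t|) := h
    _ ≤ 2 * |t| ^ 3 := by
        rw [div_le_iff₀ (by linarith)]
        nlinarith [pow_nonneg (abs_nonneg t) 3]

lemma log_one_add_div_sub_isBigO (a : ℝ) :
    (fun x : ℝ => log (1 + a / x) - (a / x - (a / x) ^ 2 / 2)) =O[atTop]
      fun x => (x ^ 3)⁻¹ := by
  refine (log_one_add_sub_sub_isBigO.comp_tendsto
    (tendsto_const_nhds.div_atTop tendsto_id)).trans ?_
  exact ((isBigO_refl _ _).const_mul_left (a ^ 3)).congr_left fun x => by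
    simp only [Function.comp_apply, id]
    ring

lemma isBigO_inv_sq_of_tendsto_zero_of_isBigO_sub {u : ℝ → ℝ} (hu : Tendsto u atTop (𝓝 0))
    (hΔ : (fun x => u (x + 1) - u x) =O[atTop] fun x => (x ^ 3)⁻¹) :
    u =O[atTop] fun x => (x ^ 2)⁻¹ := by
  obtain ⟨C, hC₀, hC⟩ := hΔ.exists_nonneg
  obtain ⟨X, hX⟩ := eventually_atTop.1 (hC.bound.and (eventually_ge_atTop 1))
  -- `e` telescopes: `e x - e (x + 1) = 6 C / (x (x + 1) (x + 2)) ≥ C / x ^ 3`.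
  set e : ℝ → ℝ := fun x => 3 * C / (x * (x + 1))
  have hstep : ∀ x ≥ X, |u x - u (x + 1)| ≤ e x - e (x + 1) := by
    intro x hx
    obtain ⟨hΔx, hx₁⟩ := hX x hx
    rw [norm_eq_abs, norm_eq_abs, abs_inv, abs_pow, abs_of_pos (by linarith : 0 < x)] at hΔx
    rw [abs_sub_comm]
    refine hΔx.trans ?_
    simp only [e]
    rw [div_sub_div _ _ (by positivity) (by positivity), le_div_iff₀ (by positivity)]
    field_simp
    nlinarith [mul_nonneg hC₀ (by nlinarith : (0 : ℝ) ≤ (x - 1) * (5 * x + 2))]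
  have htele : ∀ x ≥ X, ∀ n : ℕ, |u x - u (x + n)| ≤ e x - e (x + n) := by
    intro x hx n
    induction n with
    | zero => simp
    | succ n ih =>
      have := hstep (x + n) (by linarith [n.cast_nonneg (α := ℝ)])
      push_cast
      rw [← add_assoc]
      calc |u x - u (x + n + 1)| ≤ |u x - u (x + n)| + |u (x + n) - u (x + n + 1)| :=
            abs_sub_le _ _ _
        _ ≤ e x - e (x + ↑n + 1) := by linarith
  refine .of_bound (3 * C) ?_
  filter_upwards [eventually_ge_atTop X, eventually_ge_atTop 1] with x hx hx₁
  have hlim : Tendsto (fun n : ℕ => |u x - u (x + n)|) atTop (𝓝 |u x - 0|) :=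
    (tendsto_const_nhds.sub
      (hu.comp (tendsto_atTop_add_const_left atTop x tendsto_natCast_atTop_atTop))).abs
  have hbound : |u x| ≤ e x := by
    simpa using le_of_tendsto hlim (Eventually.of_forall fun n =>
      (htele x hx n).trans (sub_le_self _ (by positivity)))
  rw [norm_eq_abs, norm_eq_abs, abs_inv, abs_pow, abs_of_pos (by linarith : 0 < x)]
  refine hbound.trans ?_
  rw [div_le_iff₀ (by positivity), mul_assoc]
  field_simp
  nlinarith

noncomputable def logGammaRatio (a b x : ℝ) : ℝ :=
  log (Gamma (x + a)) - log (Gamma (x + b)) + (b - a) * log x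

lemma exp_logGammaRatio {a b x : ℝ} (hx : 0 < x) (hxa : 0 < x + a) (hxb : 0 < x + b) :
    exp (logGammaRatio a b x) = Gamma (x + a) / Gamma (x + b) * x ^ (b - a) := by
  rw [logGammaRatio, exp_add, exp_sub, exp_log (Gamma_pos_of_pos hxa),
    exp_log (Gamma_pos_of_pos hxb), rpow_def_of_pos hx, mul_comm (b - a)]

lemma tendsto_logGammaRatio (a b : ℝ) : Tendsto (logGammaRatio a b) atTop (𝓝 0) := by
  have h := (continuousAt_log one_ne_zero).tendsto.comp (tendsto_Gamma_div_Gamma_mul_rpow a b)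
  rw [log_one] at h
  refine h.congr' ?_
  filter_upwards [eventually_gt_atTop 0, eventually_gt_atTop (-a), eventually_gt_atTop (-b)]
    with x hx hxa hxb
  rw [Function.comp_apply, ← exp_logGammaRatio hx (by linarith) (by linarith), log_exp]

lemma logGammaRatio_add_one_sub {a b x : ℝ} (hx : 0 < x) (hxa : 0 < x + a) (hxb : 0 < x + b) :
    logGammaRatio a b (x + 1) - logGammaRatio a b x =
      log (1 + a / x) - log (1 + b / x) + (b - a) * log (1 + 1 / x) := by
  have h : ∀ c, 0 < x + c → log (1 + c / x) = log (x + c) - log x := fun c hc => by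
    rw [← log_div hc.ne' hx.ne', add_div, div_self hx.ne']
  rw [h a hxa, h b hxb, h 1 (by linarith), logGammaRatio, logGammaRatio,
    add_right_comm x 1 a, add_right_comm x 1 b, Gamma_add_one hxa.ne', Gamma_add_one hxb.ne',
    log_mul hxa.ne' (Gamma_pos_of_pos hxa).ne', log_mul hxb.ne' (Gamma_pos_of_pos hxb).ne']
  ring

lemma logGammaRatio_sub_isBigO (a b : ℝ) :
    (fun x => logGammaRatio a b x - (a - b) * (a + b - 1) / 2 / x) =O[atTop]
      fun x => (x ^ 2)⁻¹ := by
  set c := (a - b) * (a + b - 1) / 2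
  refine isBigO_inv_sq_of_tendsto_zero_of_isBigO_sub ?_ ?_
  · simpa using (tendsto_logGammaRatio a b).sub (tendsto_const_nhds.div_atTop tendsto_id)
  have hpoly : (fun x : ℝ => -c / (x ^ 2 * (x + 1))) =O[atTop] fun x => (x ^ 3)⁻¹ := by
    refine .of_bound |c| ?_
    filter_upwards [eventually_gt_atTop 0] with x hx
    rw [norm_eq_abs, norm_eq_abs, abs_div, abs_neg,
      abs_of_pos (by positivity : (0 : ℝ) < x ^ 2 * (x + 1)),
      abs_of_pos (by positivity : (0 : ℝ) < (x ^ 3)⁻¹), ← div_eq_mul_inv]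
    gcongr
    nlinarith
  refine (((log_one_add_div_sub_isBigO a).sub (log_one_add_div_sub_isBigO b)).add
    (((log_one_add_div_sub_isBigO 1).const_mul_left (b - a)).add hpoly)).congr' ?_
    EventuallyEq.rfl
  filter_upwards [eventually_gt_atTop 0, eventually_gt_atTop (-a), eventually_gt_atTop (-b)]
    with x hx hxa hxb
  rw [sub_sub_sub_comm (logGammaRatio a b (x + 1)),
    logGammaRatio_add_one_sub hx (by linarith) (by linarith)]
  generalize log (1 + a / x) = la
  generalize log (1 + b / x) = lb
  generalize log (1 + 1 / x) = l₁
  field_simp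
  ring

theorem Gamma_div_Gamma_mul_rpow_sub_isBigO (a b : ℝ) :
    (fun x => Gamma (x + a) / Gamma (x + b) * x ^ (b - a) - (1 + (a - b) * (a + b - 1) / 2 / x))
      =O[atTop] fun x => (x ^ 2)⁻¹ := by
  set c := (a - b) * (a + b - 1) / 2
  have hF := logGammaRatio_sub_isBigO a b
  have hinv : (fun x : ℝ => (x ^ 2)⁻¹) =O[atTop] fun x => x⁻¹ := by
    simpa [sq, mul_inv] using
      (isBigO_refl (fun x : ℝ => x⁻¹) atTop).mul (tendsto_inv_atTop_zero.isBigO_one ℝ)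
  have hF₁ : logGammaRatio a b =O[atTop] fun x => x⁻¹ :=
    ((hF.trans hinv).add ((isBigO_refl _ _).const_mul_left c)).congr_left fun x => by ring
  have hexp : (fun x => exp (logGammaRatio a b x) - (1 + logGammaRatio a b x)) =O[atTop]
      fun x => logGammaRatio a b x ^ 2 := by
    simpa [Finset.sum_range_succ, Function.comp_def] using
      (exp_sub_sum_range_isBigO_pow 2).comp_tendsto (tendsto_logGammaRatio a b)
  have hsq : (fun x => logGammaRatio a b x ^ 2) =O[atTop] fun x => (x ^ 2)⁻¹ := by
    simpa [inv_pow] using hF₁.pow 2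
  refine ((hexp.trans hsq).add hF).congr' ?_ EventuallyEq.rfl
  filter_upwards [eventually_gt_atTop 0, eventually_gt_atTop (-a), eventually_gt_atTop (-b)]
    with x hx hxa hxb
  rw [← exp_logGammaRatio hx (by linarith) (by linarith)]
  ring

lemma mul_sub_one_add_div_isBigO {f g : ℝ → ℝ} {α β : ℝ}
    (hf : (fun x => f x - (1 + α / x)) =O[atTop] fun x => (x ^ 2)⁻¹)
    (hg : (fun x => g x - (1 + β / x)) =O[atTop] fun x => (x ^ 2)⁻¹) :
    (fun x => f x * g x - (1 + (α + β) / x)) =O[atTop] fun x => (x ^ 2)⁻¹ := by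
  have hinv : (fun x : ℝ => (x ^ 2)⁻¹) =O[atTop] fun _ => (1 : ℝ) :=
    (tendsto_inv_atTop_zero.comp (tendsto_pow_atTop two_ne_zero)).isBigO_one ℝ
  have hbdd : ∀ γ : ℝ, (fun x => 1 + γ / x) =O[atTop] fun _ => (1 : ℝ) := fun γ =>
    (tendsto_const_nhds.add (tendsto_const_nhds.div_atTop tendsto_id)).isBigO_one ℝ
  have hg₁ : g =O[atTop] fun _ => (1 : ℝ) :=
    ((hg.trans hinv).add (hbdd β)).congr_left fun x => by ring
  refine ((((hf.mul hg₁).congr_right fun x => mul_one _).add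
    (((hbdd α).mul hg).congr_right fun x => one_mul _)).add
    ((isBigO_refl (fun x : ℝ => (x ^ 2)⁻¹) atTop).const_mul_left (α * β))).congr' ?_ ?_
  · filter_upwards [eventually_ne_atTop 0] with x hx
    field_simp
    ring
  · exact Eventually.of_forall fun x => by simp

lemma div_sub_div_add_isBigO (c d : ℝ) :
    (fun x => c / x - c / (x + d)) =O[atTop] fun x => (x ^ 2)⁻¹ := by
  refine .of_bound (2 * |c * d|) ?_
  filter_upwards [eventually_gt_atTop 0, eventually_ge_atTop (2 * |d|)] with x hx hxd
  have hxd' : 0 < x + d := by linarith [neg_abs_le d]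
  have e : c / x - c / (x + d) = c * d / (x * (x + d)) := by
    field_simp
    ring
  rw [e, norm_eq_abs, norm_eq_abs, abs_div, abs_of_pos (by positivity : 0 < x * (x + d)),
    abs_of_pos (by positivity : (0 : ℝ) < (x ^ 2)⁻¹), div_le_iff₀ (by positivity)]
  field_simp
  nlinarith [abs_nonneg (c * d), neg_abs_le d]

lemma sub_one_add_div_isBigO_comp_div_const {f : ℝ → ℝ} {α k : ℝ} (hk : 0 < k)
    (hf : (fun x => f x - (1 + α / x)) =O[atTop] fun x => (x ^ 2)⁻¹) :
    (fun s => f (s / k) - (1 + k * α / s)) =O[atTop] fun s => (s ^ 2)⁻¹ := by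
  refine ((hf.comp_tendsto (tendsto_id.atTop_div_const hk)).trans ?_).congr_left fun s => ?_
  · exact ((isBigO_refl _ _).const_mul_left (k ^ 2)).congr_left fun s => by
      simp only [Function.comp_apply, id]
      field_simp
  · simp only [Function.comp_apply, id, div_div_eq_mul_div, mul_comm α]

lemma G1_eq_mul_Gamma_div_Gamma_mul_rpow (m : ℕ) (μ : ℝ) {s : ℝ} (hs : 0 < s)
    (hsμ : 0 < s + μ) (hsm : 0 < s / 2 + (1 - m)) :
    G1 m μ s = 2 ^ (1 - μ) * Gamma (s + μ) *
      (Gamma (s + 1) / Gamma (s + μ) * s ^ (μ - 1) *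
        (Gamma (s / 2 + (μ - m)) / Gamma (s / 2 + (1 - m)) *
          (s / 2) ^ ((1 - m) - (μ - m)))) := by
  have hΓμ := (Gamma_pos_of_pos hsμ).ne'
  have hΓm := (Gamma_pos_of_pos hsm).ne'
  have hpow : s ^ (μ - 1) * s ^ (1 - μ) = 1 := by
    rw [← rpow_add hs, sub_add_sub_cancel', sub_self, rpow_zero]
  rw [G1, add_comm 1 s, add_comm (μ - m), add_comm (1 - (m : ℝ)), div_rpow hs.le zero_le_two,
    sub_sub_sub_cancel_right]
  generalize Gamma (s / 2 + (μ - m)) = A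
  generalize Gamma (s + 1) = B
  generalize Gamma (s / 2 + (1 - m)) = C at hΓm
  field_simp
  linear_combination -A * B * hpow

theorem G1_inverse_factorial_expansion (m : ℕ) (μ : ℝ) :
    (fun s : ℝ => G1 m μ s -
        (2 : ℝ) ^ (1 - μ) * Real.Gamma (s + μ) *
          (1 + ((1 - μ) * (4 * (m : ℝ) - μ) / 2) / (s + μ - 1)))
      =O[Filter.atTop] (fun s : ℝ => Real.Gamma (s + μ) / s ^ 2) := by
  have hprod := mul_sub_one_add_div_isBigO (Gamma_div_Gamma_mul_rpow_sub_isBigO 1 μ)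
    (sub_one_add_div_isBigO_comp_div_const two_pos
      (Gamma_div_Gamma_mul_rpow_sub_isBigO (μ - m) (1 - m)))
  have hW := (hprod.add (div_sub_div_add_isBigO ((1 - μ) * (4 * (m : ℝ) - μ) / 2) (μ - 1)))
  refine (((isBigO_refl (fun s => Gamma (s + μ)) atTop).mul hW).const_mul_left
    (2 ^ (1 - μ))).congr' ?_ (Eventually.of_forall fun s => (div_eq_mul_inv _ _).symm)
  filter_upwards [eventually_gt_atTop 0, eventually_gt_atTop (-μ),
    eventually_gt_atTop (2 * (m - 1 : ℝ))] with s hs hsμ hsm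
  rw [G1_eq_mul_Gamma_div_Gamma_mul_rpow m μ hs (by linarith) (by linarith)]
  ring
end

section
/- For μ > 0, ν > −1, and nonnegative integer k, with χ ≥ 0, the derivative at ε = 0 of the function ε ↦ ₁F₂(ε; 1−μ+ε, 1+ν; χ) satisfies: ₁F₂(ε; 1−μ+ε, 1+ν; χ) = 1 + ε χ Γ(1−μ)Γ(1+ν) ₂**F**₃(1,1; 2, 2−μ, 2+ν; χ) + O(ε²) as ε → 0, where ₂**F**₃ is the regularized hypergeometric function ∑_{n=0}^∞ (1)_n (1)_n χ^n/(Γ(2+n)Γ(2−μ+n)Γ(2+ν+n) n!) and μ is not a positive integer. -/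
/-!
Since `(ε)_{k+1} = ε (ε+1)_k`, the ₁F₂ series equals `1 + ε Φ(ε)` with
`Φ(ε) = ∑ φ_k(ε)` (`φ_k = slopeTerm`), and `Γ(c + k + 1) = (c)_{k+1} Γ(c)` identifies `Φ(0)`
term by term with `χ Γ(1-μ) Γ(1+ν) ₂F₃`. Each `φ_k` is a rational function of `ε` whose poles
`μ - 1 - j` stay a fixed distance away from `0`, so on a small complex disc around `0` it is
holomorphic and bounded by `(2|χ|)^{k+1} / ∏_{j ≤ k} |1-μ+j| |1+ν+j|`, which is summable by the
ratio test. By Weierstrass `Φ` is holomorphic near `0`, hence `Φ(ε) - Φ(0) = O(ε)` and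
`ε (Φ(ε) - Φ(0)) = O(ε²)`.
-/

open Real Filter Asymptotics

open Finset Topology
open scoped Nat

lemma poch_succ_eq_mul_poch_add_one (a : ℝ) (n : ℕ) : poch a (n + 1) = a * poch (a + 1) n := by
  simp only [poch, prod_range_succ', Nat.cast_add, Nat.cast_one, Nat.cast_zero, add_zero]
  rw [mul_comm]
  congr 1
  exact prod_congr rfl fun j _ => by ring

lemma poch_ne_zero {a : ℝ} (ha : ∀ j : ℕ, a + j ≠ 0) (n : ℕ) : poch a n ≠ 0 :=
  prod_ne_zero_iff.mpr fun j _ => ha j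

lemma poch_one_eq_factorial (n : ℕ) : poch 1 n = n ! := by
  induction n with
  | zero => simp [poch]
  | succ n ih => rw [poch, prod_range_succ, ← poch, ih, Nat.factorial_succ]; push_cast; ring

lemma Gamma_add_nat_eq_poch_mul {a : ℝ} {n : ℕ} (ha : ∀ j < n, a + j ≠ 0) :
    Gamma (a + n) = poch a n * Gamma a := by
  induction n with
  | zero => simp [poch]
  | succ n ih =>
    rw [Nat.cast_succ, ← add_assoc, Gamma_add_one (ha n n.lt_succ_self),
      ih fun j hj => ha j (hj.trans n.lt_succ_self)]
    simp only [poch, prod_range_succ]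
    ring

lemma tendsto_abs_add_natCast_atTop (a : ℝ) : Tendsto (fun j : ℕ => |a + j|) atTop atTop :=
  tendsto_abs_atTop_atTop.comp (tendsto_atTop_add_const_left _ a tendsto_natCast_atTop_atTop)

lemma exists_pos_forall_le_abs_add_nat {a : ℝ} (ha : ∀ j : ℕ, a + j ≠ 0) :
    ∃ d > 0, ∀ j : ℕ, d ≤ |a + j| := by
  obtain ⟨j₀, hj₀⟩ := (Nat.cofinite_eq_atTop ▸ tendsto_abs_add_natCast_atTop a).exists_forall_le
  exact ⟨|a + j₀|, abs_pos.mpr (ha j₀), hj₀⟩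

theorem summable_pow_div_prod_of_tendsto_atTop (x : ℝ) {c : ℕ → ℝ} (hc : Tendsto c atTop atTop) :
    Summable fun n => x ^ n / ∏ j ∈ range n, c j := by
  refine summable_of_ratio_norm_eventually_le one_half_lt_one ?_
  filter_upwards [hc.eventually_ge_atTop (2 * |x| + 1)] with n hn
  rw [prod_range_succ, pow_succ, mul_div_mul_comm, norm_mul, mul_comm]
  gcongr
  have hcn : 0 < c n := by linarith [abs_nonneg x]
  rw [norm_div, Real.norm_eq_abs, Real.norm_eq_abs, abs_of_pos hcn, div_le_iff₀ hcn]
  linarith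

section ComplexExtension

variable {ι : Type*} {f : ι → ℝ → ℝ} {F : ι → ℂ → ℂ} {u : ι → ℝ} {U : Set ℂ} {x₀ : ℝ}

theorem eventually_summable_of_ofReal_eq_of_norm_le (hU : IsOpen U) (hx₀ : (x₀ : ℂ) ∈ U)
    (hu : Summable u) (hFu : ∀ i, ∀ w ∈ U, ‖F i w‖ ≤ u i) (hfF : ∀ i x, (f i x : ℂ) = F i x) :
    ∀ᶠ x in 𝓝 x₀, Summable fun i => f i x := by
  filter_upwards [Complex.continuous_ofReal.continuousAt.preimage_mem_nhds (hU.mem_nhds hx₀)]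
    with x hx
  exact hu.of_norm_bounded fun i => by rw [← Complex.norm_real, hfF]; exact hFu i x hx

theorem isBigO_tsum_sub_of_ofReal_eq_of_norm_le (hU : IsOpen U) (hx₀ : (x₀ : ℂ) ∈ U)
    (hu : Summable u) (hF : ∀ i, DifferentiableOn ℂ (F i) U) (hFu : ∀ i, ∀ w ∈ U, ‖F i w‖ ≤ u i)
    (hfF : ∀ i x, (f i x : ℂ) = F i x) :
    (fun x => ∑' i, f i x - ∑' i, f i x₀) =O[𝓝 x₀] (fun x => x - x₀) := by
  have hG := ((Complex.differentiableOn_tsum_of_summable_norm hu hF hU hFu).differentiableAt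
    (hU.mem_nhds hx₀)).isBigO_sub.comp_tendsto (Complex.continuous_ofReal.tendsto x₀)
  rw [← Complex.isBigO_ofReal_left, ← Complex.isBigO_ofReal_right]
  simpa only [Function.comp_def, Complex.ofReal_sub, Complex.ofReal_tsum, hfF] using hG

end ComplexExtension

lemma norm_prod_add_one_add_nat_le {z : ℂ} (hz : ‖z‖ ≤ 1) (k : ℕ) :
    ‖∏ j ∈ range k, (z + 1 + j)‖ ≤ (k + 1)! := by
  rw [norm_prod]
  calc ∏ j ∈ range k, ‖z + 1 + j‖ ≤ ∏ j ∈ range k, (2 + j : ℝ) := by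
        refine prod_le_prod (fun _ _ => norm_nonneg _) fun j _ => (norm_add_le _ _).trans ?_
        grw [norm_add_le, hz]
        simp only [norm_one, Complex.norm_natCast]
        norm_num
    _ = (k + 1)! := by
        rw [← poch_one_eq_factorial, poch_succ_eq_mul_poch_add_one, one_mul, poch]
        norm_num

lemma abs_poch_le_two_pow_mul_norm_prod {a d : ℝ} {z : ℂ} (had : ∀ j : ℕ, d ≤ |a + j|)
    (hz : 2 * ‖z‖ ≤ d) (n : ℕ) :
    |poch a n| ≤ 2 ^ n * ‖∏ j ∈ range n, ((a : ℂ) + z + j)‖ := by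
  have hfactor : ∏ j ∈ range n, (|a + j| / 2) ≤ ∏ j ∈ range n, ‖(a : ℂ) + z + j‖ :=
    prod_le_prod (fun _ _ => by positivity) fun j _ => ?_
  · rw [prod_div_distrib, prod_const, card_range, div_le_iff₀' (by positivity)] at hfactor
    rwa [poch, abs_prod, norm_prod]
  have hsplit : (((a + j : ℝ)) : ℂ) = (a + z + j) - z := by push_cast; ring
  have := norm_sub_le ((a : ℂ) + z + j) z
  rw [← hsplit, Complex.norm_real, Real.norm_eq_abs] at this
  linarith [had j]

noncomputable def slopeTerm (a b χ : ℝ) (k : ℕ) (ε : ℝ) : ℝ :=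
  χ ^ (k + 1) / (poch b (k + 1) * (k + 1)!) * (poch (ε + 1) k / poch (a + ε) (k + 1))

noncomputable def complexSlopeTerm (a b χ : ℝ) (k : ℕ) (z : ℂ) : ℂ :=
  (χ ^ (k + 1) / (poch b (k + 1) * (k + 1)!) : ℝ) *
    ((∏ j ∈ range k, (z + 1 + j)) / ∏ j ∈ range (k + 1), (a + z + j))

lemma ofReal_slopeTerm (a b χ : ℝ) (k : ℕ) (ε : ℝ) :
    (slopeTerm a b χ k ε : ℂ) = complexSlopeTerm a b χ k ε := by
  simp only [slopeTerm, complexSlopeTerm, poch]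
  push_cast
  simp only [add_right_comm]

lemma poch_mul_pow_div_eq_mul_slopeTerm (a b χ ε : ℝ) (k : ℕ) :
    poch ε (k + 1) * χ ^ (k + 1) / (poch (a + ε) (k + 1) * poch b (k + 1) * (k + 1)!) =
      ε * slopeTerm a b χ k ε := by
  rw [slopeTerm, poch_succ_eq_mul_poch_add_one]
  ring

lemma tsum_hyp1F2_eq_one_add_mul_tsum_slopeTerm {a b χ ε : ℝ}
    (h : Summable fun k => slopeTerm a b χ k ε) :
    ∑' n : ℕ, poch ε n * χ ^ n / (poch (a + ε) n * poch b n * n !) =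
      1 + ε * ∑' k, slopeTerm a b χ k ε := by
  rw [tsum_eq_zero_add']
  · simp only [poch_mul_pow_div_eq_mul_slopeTerm, tsum_mul_left]
    simp [poch]
  · simpa only [poch_mul_pow_div_eq_mul_slopeTerm] using h.mul_left ε

lemma Gamma_mul_hyp2F3_term_eq_slopeTerm_zero {a b : ℝ} (χ : ℝ) (ha : ∀ j : ℕ, a + j ≠ 0)
    (hb : ∀ j : ℕ, b + j ≠ 0) (n : ℕ) :
    χ * Gamma a * Gamma b * (poch 1 n * poch 1 n * χ ^ n /
      (Gamma (2 + n) * Gamma (a + 1 + n) * Gamma (b + 1 + n) * n !)) = slopeTerm a b χ n 0 := by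
  have hΓ2 : Gamma (2 + n) = (n + 1)! := by
    rw [← Real.Gamma_nat_eq_factorial]; push_cast; ring_nf
  have hΓa : Gamma (a + 1 + n) = poch a (n + 1) * Gamma a := by
    rw [← Gamma_add_nat_eq_poch_mul fun j _ => ha j]; push_cast; ring_nf
  have hΓb : Gamma (b + 1 + n) = poch b (n + 1) * Gamma b := by
    rw [← Gamma_add_nat_eq_poch_mul fun j _ => hb j]; push_cast; ring_nf
  have hΓa0 : Gamma a ≠ 0 := Real.Gamma_ne_zero fun m h => ha m (by linarith)
  have hΓb0 : Gamma b ≠ 0 := Real.Gamma_ne_zero fun m h => hb m (by linarith)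
  have hpa := poch_ne_zero ha (n + 1)
  have hpb := poch_ne_zero hb (n + 1)
  rw [slopeTerm, zero_add, add_zero, poch_one_eq_factorial, hΓ2, hΓa, hΓb]
  field_simp
  ring

lemma norm_complexSlopeTerm_le {a d : ℝ} (b χ : ℝ) {z : ℂ} (hd : 0 < d)
    (had : ∀ j : ℕ, d ≤ |a + j|) (hz1 : ‖z‖ ≤ 1) (hzd : 2 * ‖z‖ ≤ d) (k : ℕ) :
    ‖complexSlopeTerm a b χ k z‖ ≤
      (2 * |χ|) ^ (k + 1) / ∏ j ∈ range (k + 1), (|a + j| * |b + j|) := by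
  have hpa : 0 < |poch a (k + 1)| :=
    abs_pos.mpr (poch_ne_zero (fun j => abs_pos.mp (hd.trans_le (had j))) _)
  have hden := abs_poch_le_two_pow_mul_norm_prod had hzd (k + 1)
  have hnum := norm_prod_add_one_add_nat_le hz1 k
  rw [complexSlopeTerm, norm_mul, norm_div, Complex.norm_real, Real.norm_eq_abs, abs_div,
    abs_mul, abs_pow, prod_mul_distrib, ← abs_prod, ← abs_prod, ← poch, ← poch, Nat.abs_cast]
  calc _ ≤ |χ| ^ (k + 1) / (|poch b (k + 1)| * (k + 1)!) *
        ((k + 1)! / (|poch a (k + 1)| / 2 ^ (k + 1))) := by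
        gcongr
        rwa [div_le_iff₀' (by positivity)]
    _ = _ := by
        have hF : ((k + 1)! : ℝ) ≠ 0 := by positivity
        rw [mul_pow, div_div_eq_mul_div]
        field_simp

theorem exists_ball_summable_bound_complexSlopeTerm {a : ℝ} (b χ : ℝ) (ha : ∀ j : ℕ, a + j ≠ 0) :
    ∃ r > 0, ∃ u : ℕ → ℝ, Summable u ∧ ∀ k, DifferentiableOn ℂ (complexSlopeTerm a b χ k)
      (Metric.ball 0 r) ∧ ∀ z ∈ Metric.ball (0 : ℂ) r, ‖complexSlopeTerm a b χ k z‖ ≤ u k := by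
  obtain ⟨d, hd, had⟩ := exists_pos_forall_le_abs_add_nat ha
  have hc : Tendsto (fun j : ℕ => |a + j| * |b + j|) atTop atTop :=
    (tendsto_abs_add_natCast_atTop a).atTop_mul_atTop₀ (tendsto_abs_add_natCast_atTop b)
  refine ⟨min 1 (d / 2), by positivity, _,
    (summable_nat_add_iff 1).mpr (summable_pow_div_prod_of_tendsto_atTop (2 * |χ|) hc),
    fun k => ⟨?_, fun z hz => ?_⟩⟩
  · have hQ : ∀ z ∈ Metric.ball (0 : ℂ) (min 1 (d / 2)),
        ∏ j ∈ range (k + 1), ((a : ℂ) + z + j) ≠ 0 := by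
      intro z hz
      rw [mem_ball_zero_iff, lt_min_iff] at hz
      have := abs_poch_le_two_pow_mul_norm_prod had (by linarith [hz.2]) (k + 1)
      have hpa : 0 < |poch a (k + 1)| := abs_pos.mpr (poch_ne_zero ha _)
      exact norm_pos_iff.mp (pos_of_mul_pos_right (hpa.trans_le this) (by positivity))
    unfold complexSlopeTerm
    fun_prop (disch := assumption)
  · rw [mem_ball_zero_iff, lt_min_iff] at hz
    exact norm_complexSlopeTerm_le b χ hd had hz.1.le (by linarith [hz.2]) k

theorem hyp1F2_epsilon_expansion_general (μ ν χ : ℝ) (hν : -1 < ν)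
    (hμ : ∀ n : ℕ, μ ≠ (n : ℝ) + 1) :
    (fun ε : ℝ =>
        (∑' n : ℕ, poch ε n * χ ^ n /
            (poch (1 - μ + ε) n * poch (1 + ν) n * n.factorial)) -
          1 - ε * χ * Real.Gamma (1 - μ) * Real.Gamma (1 + ν) *
            (∑' n : ℕ, poch 1 n * poch 1 n * χ ^ n /
              (Real.Gamma (2 + n) * Real.Gamma (2 - μ + n) * Real.Gamma (2 + ν + n) *
                n.factorial)))
      =O[nhds (0 : ℝ)] (fun ε : ℝ => ε ^ 2) := by
  have ha : ∀ j : ℕ, 1 - μ + j ≠ 0 := fun j h => hμ j (by linarith)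
  have hb : ∀ j : ℕ, 1 + ν + j ≠ 0 := fun j => ne_of_gt (by linarith [j.cast_nonneg (α := ℝ)])
  obtain ⟨r, hr, u, hu, hFu⟩ := exists_ball_summable_bound_complexSlopeTerm (1 + ν) χ ha
  have h0 : ((0 : ℝ) : ℂ) ∈ Metric.ball (0 : ℂ) r := by simpa using hr
  have hsum := eventually_summable_of_ofReal_eq_of_norm_le Metric.isOpen_ball h0 hu
    (fun k => (hFu k).2) (ofReal_slopeTerm _ _ _)
  have hslope := isBigO_tsum_sub_of_ofReal_eq_of_norm_le Metric.isOpen_ball h0 hu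
    (fun k => (hFu k).1) (fun k => (hFu k).2) (ofReal_slopeTerm _ _ _)
  have hlin : χ * Gamma (1 - μ) * Gamma (1 + ν) * ∑' n : ℕ, poch 1 n * poch 1 n * χ ^ n /
      (Gamma (2 + n) * Gamma (2 - μ + n) * Gamma (2 + ν + n) * n !) =
        ∑' k, slopeTerm (1 - μ) (1 + ν) χ k 0 := by
    rw [← tsum_mul_left, show (2 : ℝ) - μ = 1 - μ + 1 by ring,
      show (2 : ℝ) + ν = 1 + ν + 1 by ring]
    exact tsum_congr (Gamma_mul_hyp2F3_term_eq_slopeTerm_zero χ ha hb)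
  refine ((isBigO_refl (fun ε : ℝ => ε) _).mul hslope).congr' ?_ (by simp [sq])
  filter_upwards [hsum] with ε hε
  rw [tsum_hyp1F2_eq_one_add_mul_tsum_slopeTerm hε, ← hlin]
  ring

theorem hyp1F2_epsilon_expansion (μ ν χ : ℝ) (hμ0 : 0 < μ) (hν : -1 < ν) (hχ : 0 ≤ χ)
    (hμ : ∀ n : ℕ, μ ≠ (n : ℝ) + 1) :
    (fun ε : ℝ =>
        (∑' n : ℕ, poch ε n * χ ^ n /
            (poch (1 - μ + ε) n * poch (1 + ν) n * n.factorial)) -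
          1 - ε * χ * Real.Gamma (1 - μ) * Real.Gamma (1 + ν) *
            (∑' n : ℕ, poch 1 n * poch 1 n * χ ^ n /
              (Real.Gamma (2 + n) * Real.Gamma (2 - μ + n) * Real.Gamma (2 + ν + n) *
                n.factorial)))
      =O[nhds (0 : ℝ)] (fun ε : ℝ => ε ^ 2) :=
  hyp1F2_epsilon_expansion_general μ ν χ hν hμ
end
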